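/- In every planar geometric storyplan of the graph G, there exist at least 6 distinct index pairs (i,j) ∈ {1,2,3,4} × {1,2} such that for each of them there is a time step at which the apex pair q_i^j, r_i^j and all twelve cycle vertices are simultaneously visible. -/

import Mathlib

/-- The straight-line drawing `D` of the subgraph of `G` induced by the visible
vertex set `S` is planar. -/
def IsPlanarSLFrame {V : Type*} (G : SimpleGraph V) (S : Set V) (D : V → ℝ × ℝ) : Prop :=
  Set.InjOn D S ∧
  (∀ u v w, G.Adj u v → u ∈ S → v ∈ S → w ∈ S → w ≠ u → w ≠ v →
      D w ∉ openSegment ℝ (D u) (D v)) ∧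
  (∀ u v x y, G.Adj u v → G.Adj x y → u ∈ S → v ∈ S → x ∈ S → y ∈ S →
      ¬((u = x ∧ v = y) ∨ (u = y ∧ v = x)) →
      ∀ p ∈ segment ℝ (D u) (D v) ∩ segment ℝ (D x) (D y),
        ∃ z, (z = u ∨ z = v) ∧ (z = x ∨ z = y) ∧ p = D z)

/-- `(len, s, e, D)` is a planar geometric storyplan of `G`: `len ≥ 1` time steps,
each vertex `v` is visible on the nonempty interval `[s v, e v] ⊆ [1, len]`,
the endpoints of every edge co-occur, and every frame is a planar
straight-line drawing. -/
def IsGeomStoryplan {V : Type*} (G : SimpleGraph V)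
    (len : ℕ) (s e : V → ℕ) (D : V → ℝ × ℝ) : Prop :=
  1 ≤ len ∧
  (∀ v, 1 ≤ s v ∧ s v ≤ e v ∧ e v ≤ len) ∧
  (∀ u v, G.Adj u v → ∃ t, s u ≤ t ∧ t ≤ e u ∧ s v ≤ t ∧ t ≤ e v) ∧
  (∀ t, 1 ≤ t → t ≤ len → IsPlanarSLFrame G {v | s v ≤ t ∧ t ≤ e v} D)

/-- `G` admits a planar geometric storyplan. -/
def HasGeomStoryplan {V : Type*} (G : SimpleGraph V) : Prop :=
  ∃ len s e D, IsGeomStoryplan G len s e D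

/-- The 28 vertices of the graph `G`: cycle vertices `a i`, `b i`, `c i`
(`i ∈ Fin 4`), apex vertices `q i j` and edge vertices `r i j`
(`i ∈ Fin 4`, `j ∈ Fin 2`). -/
inductive GVert : Type
  | a : Fin 4 → GVert
  | b : Fin 4 → GVert
  | c : Fin 4 → GVert
  | q : Fin 4 → Fin 2 → GVert
  | r : Fin 4 → Fin 2 → GVert
  deriving DecidableEq

/-- Base relation generating the edges of `G`: the three 4-cycles
`A`, `B`, `C`; each apex vertex `q i j` adjacent to all twelve cycle vertices;
each edge vertex `r i j` adjacent to `q i j` and to the six cycle vertices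
`a i, a (i+1), b i, b (i+1), c i, c (i+1)`. -/
def GRel : GVert → GVert → Prop
  | .a i, .a k => k = i + 1
  | .b i, .b k => k = i + 1
  | .c i, .c k => k = i + 1
  | .q _ _, .a _ => True
  | .q _ _, .b _ => True
  | .q _ _, .c _ => True
  | .r i j, .q i' j' => i' = i ∧ j' = j
  | .r i _, .a k => k = i ∨ k = i + 1
  | .r i _, .b k => k = i ∨ k = i + 1
  | .r i _, .c k => k = i ∨ k = i + 1
  | _, _ => False

/-- The graph `G` from the paper (28 vertices). -/
def GraphG : SimpleGraph GVert := SimpleGraph.fromRel GRel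

/-- Vertex `v` is visible at time `t`. -/
def Visible (s e : GVert → ℕ) (t : ℕ) (v : GVert) : Prop :=
  s v ≤ t ∧ t ≤ e v

/-- All twelve cycle vertices are visible at time `t`. -/
def CyclesVisible (s e : GVert → ℕ) (t : ℕ) : Prop :=
  ∀ k : Fin 4, Visible s e t (.a k) ∧ Visible s e t (.b k) ∧ Visible s e t (.c k)

/-!
Two obstructions to planar straight-line drawings do the work, both proved by nesting triangles:
a vertex strictly inside a drawn triangle drags its other neighbours inside with it, and no corner
of a triangle lies strictly inside a triangle whose corners lie in the closed first one.

First, a path `u – v – w` has at most four common neighbours: two of them on the same sides of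
both `uv` and `vw` would nest their triangles. If some cycle vertex appeared only after another one
disappeared, then at that moment the latter's two cycle neighbours and all eight apexes `q` would
be visible; so the twelve cycle intervals share a window `[cycleStart, cycleEnd]`.

Second, an apex `q`, its edge vertex `r`, another apex `q'` and `aᵢ, aᵢ₊₁, bᵢ, bᵢ₊₁` (a `K₃,₄`
plus the edges `qr`, `aᵢaᵢ₊₁`, `bᵢbᵢ₊₁`) cannot be drawn. If the intervals of two edge vertices
both ended before the window, then at the later end this configuration would be visible. Hence
at most one edge vertex misses the window on each side, and the other six pairs meet it.
-/

def orient (a b c : ℝ × ℝ) : ℝ := (b.1 - a.1) * (c.2 - a.2) - (b.2 - a.2) * (c.1 - a.1)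

def triangle (a b c : ℝ × ℝ) : Set (ℝ × ℝ) :=
  {z | ∃ α β γ : ℝ, 0 ≤ α ∧ 0 ≤ β ∧ 0 ≤ γ ∧ α + β + γ = 1 ∧ α • a + β • b + γ • c = z}

def openTriangle (a b c : ℝ × ℝ) : Set (ℝ × ℝ) :=
  {z | ∃ α β γ : ℝ, 0 < α ∧ 0 < β ∧ 0 < γ ∧ α + β + γ = 1 ∧ α • a + β • b + γ • c = z}

section Geometry

lemma mul_pos_of_ne_zero_of_pos_iff {a b : ℝ} (ha : a ≠ 0) (hb : b ≠ 0) (h : 0 < a ↔ 0 < b) :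
    0 < a * b := by
  rcases ha.lt_or_gt with ha | ha
  · exact mul_pos_of_neg_of_neg ha (hb.lt_of_le (not_lt.1 fun hb => (h.2 hb).not_gt ha))
  · exact mul_pos ha (h.1 ha)

variable {a b c p q x y z : ℝ × ℝ}

lemma openTriangle_subset_triangle : openTriangle a b c ⊆ triangle a b c :=
  fun _ ⟨α, β, γ, hα, hβ, hγ, h⟩ => ⟨α, β, γ, hα.le, hβ.le, hγ.le, h⟩

lemma middle_mem_triangle (a b c : ℝ × ℝ) : b ∈ triangle a b c :=
  ⟨0, 1, 0, le_rfl, zero_le_one, le_rfl, by norm_num, by simp⟩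

lemma right_mem_triangle (a b c : ℝ × ℝ) : c ∈ triangle a b c :=
  ⟨0, 0, 1, le_rfl, le_rfl, zero_le_one, by norm_num, by simp⟩

lemma mem_triangle_rotate (h : z ∈ triangle a b c) : z ∈ triangle b c a := by
  obtain ⟨α, β, γ, hα, hβ, hγ, hsum, rfl⟩ := h
  exact ⟨β, γ, α, hβ, hγ, hα, by linarith, by abel⟩

lemma orient_combination {α β γ : ℝ} (h : α + β + γ = 1) :
    orient (α • a + β • b + γ • c) p q =
      α * orient a p q + β * orient b p q + γ * orient c p q := by
  obtain rfl : γ = 1 - α - β := by linarith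
  simp only [orient, Prod.fst_add, Prod.snd_add, Prod.smul_fst, Prod.smul_snd, smul_eq_mul]
  ring

lemma orient_eq_of_combination {α β γ : ℝ} (h : α + β + γ = 1)
    (hz : α • a + β • b + γ • c = z) : orient z b c = α * orient a b c := by
  rw [← hz, orient_combination h]
  simp only [orient]
  ring

lemma exists_combination_of_orient_ne_zero (hd : orient a b c ≠ 0) (z : ℝ × ℝ) :
    ∃ α β γ : ℝ, α + β + γ = 1 ∧ α • a + β • b + γ • c = z := by
  refine ⟨orient z b c / orient a b c, orient a z c / orient a b c,
    orient a b z / orient a b c, ?_, ?_⟩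
  · field_simp
    unfold orient
    ring
  · ext <;> simp only [Prod.fst_add, Prod.snd_add, Prod.smul_fst, Prod.smul_snd,
      smul_eq_mul] <;> field_simp <;> unfold orient <;> ring

-- Cramer's rule: the affine dependence between four points of the plane.
lemma orient_relation_sum (p₀ p₁ p₂ p₃ : ℝ × ℝ) :
    orient p₁ p₂ p₃ + -orient p₀ p₂ p₃ + orient p₀ p₁ p₃ + -orient p₀ p₁ p₂ = 0 := by
  unfold orient; ring

lemma orient_relation (p₀ p₁ p₂ p₃ : ℝ × ℝ) :
    orient p₁ p₂ p₃ • p₀ + (-orient p₀ p₂ p₃) • p₁ + orient p₀ p₁ p₃ • p₂ +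
      (-orient p₀ p₁ p₂) • p₃ = 0 := by
  ext <;> simp only [Prod.fst_add, Prod.snd_add, Prod.smul_fst, Prod.smul_snd,
      smul_eq_mul, Prod.fst_zero, Prod.snd_zero] <;> unfold orient <;> ring

lemma combination_of_smul_eq {w α β γ : ℝ} (hw : w ≠ 0)
    (h : w • p = α • a + β • b + γ • c) :
    (α / w) • a + (β / w) • b + (γ / w) • c = p := by
  apply smul_right_injective _ hw
  simp only [smul_add, smul_smul, mul_div_cancel₀ _ hw]
  exact h.symm

lemma mem_triangle_of_smul_eq {w α β γ : ℝ} (hw : 0 < w) (hα : 0 ≤ α) (hβ : 0 ≤ β)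
    (hγ : 0 ≤ γ) (hsum : α + β + γ = w) (h : w • p = α • a + β • b + γ • c) :
    p ∈ triangle a b c :=
  ⟨α / w, β / w, γ / w, by positivity, by positivity, by positivity,
    by field_simp; exact hsum, combination_of_smul_eq hw.ne' h⟩

lemma mem_openTriangle_of_smul_eq {w α β γ : ℝ} (hw : 0 < w) (hα : 0 < α) (hβ : 0 < β)
    (hγ : 0 < γ) (hsum : α + β + γ = w) (h : w • p = α • a + β • b + γ • c) :
    p ∈ openTriangle a b c :=
  ⟨α / w, β / w, γ / w, by positivity, by positivity, by positivity,
    by field_simp; exact hsum, combination_of_smul_eq hw.ne' h⟩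

lemma not_disjoint_segment_of_smul_eq {α β γ δ : ℝ} (hα : 0 ≤ α) (hβ : 0 ≤ β)
    (hγ : 0 ≤ γ) (hδ : 0 ≤ δ) (hpos : 0 < α + β) (hsum : α + β = γ + δ)
    (h : α • a + β • b = γ • p + δ • q) : ¬Disjoint (segment ℝ a b) (segment ℝ p q) :=
  Set.not_disjoint_iff_nonempty_inter.2 ⟨(α + β)⁻¹ • (α • a + β • b),
    ⟨α / (α + β), β / (α + β), by positivity, by positivity, by field_simp, by module⟩,
    ⟨γ / (α + β), δ / (α + β), by positivity, by positivity, by field_simp; linarith,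
      by rw [h]; module⟩⟩

lemma radon_four {p₀ p₁ p₂ p₃ : ℝ × ℝ} {w₀ w₁ w₂ w₃ : ℝ} (h₀ : w₀ ≠ 0) (h₁ : w₁ ≠ 0)
    (h₂ : w₂ ≠ 0) (h₃ : w₃ ≠ 0) (hsum : w₀ + w₁ + w₂ + w₃ = 0)
    (h : w₀ • p₀ + w₁ • p₁ + w₂ • p₂ + w₃ • p₃ = 0) :
    p₀ ∈ openTriangle p₁ p₂ p₃ ∨ p₁ ∈ openTriangle p₀ p₂ p₃ ∨
      p₂ ∈ openTriangle p₀ p₁ p₃ ∨ p₃ ∈ openTriangle p₀ p₁ p₂ ∨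
      ¬Disjoint (segment ℝ p₀ p₁) (segment ℝ p₂ p₃) ∨
      ¬Disjoint (segment ℝ p₀ p₂) (segment ℝ p₁ p₃) ∨
      ¬Disjoint (segment ℝ p₀ p₃) (segment ℝ p₁ p₂) := by
  wlog hw₀ : 0 < w₀ generalizing w₀ w₁ w₂ w₃
  · exact this (neg_ne_zero.2 h₀) (neg_ne_zero.2 h₁) (neg_ne_zero.2 h₂) (neg_ne_zero.2 h₃)
      (by linarith) (by rw [← neg_eq_zero.2 h]; module)
      (neg_pos.2 (h₀.lt_of_le (not_lt.1 hw₀)))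
  rcases h₁.lt_or_gt with h₁ | h₁ <;> rcases h₂.lt_or_gt with h₂ | h₂ <;>
    rcases h₃.lt_or_gt with h₃ | h₃
  · exact .inl (mem_openTriangle_of_smul_eq hw₀ (neg_pos.2 h₁) (neg_pos.2 h₂) (neg_pos.2 h₃)
      (by linarith) (by linear_combination (norm := module) h))
  · exact .inr <| .inr <| .inr <| .inr <| .inr <| .inr <| not_disjoint_segment_of_smul_eq
      hw₀.le h₃.le (neg_pos.2 h₁).le (neg_pos.2 h₂).le (by linarith) (by linarith)
      (by linear_combination (norm := module) h)
  · exact .inr <| .inr <| .inr <| .inr <| .inr <| .inl <| not_disjoint_segment_of_smul_eq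
      hw₀.le h₂.le (neg_pos.2 h₁).le (neg_pos.2 h₃).le (by linarith) (by linarith)
      (by linear_combination (norm := module) h)
  · exact .inr <| .inl <| mem_openTriangle_of_smul_eq (neg_pos.2 h₁) hw₀ h₂ h₃
      (by linarith) (by linear_combination (norm := module) -h)
  · exact .inr <| .inr <| .inr <| .inr <| .inl <| not_disjoint_segment_of_smul_eq
      hw₀.le h₁.le (neg_pos.2 h₂).le (neg_pos.2 h₃).le (by linarith) (by linarith)
      (by linear_combination (norm := module) h)
  · exact .inr <| .inr <| .inl <| mem_openTriangle_of_smul_eq (neg_pos.2 h₂) hw₀ h₁ h₃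
      (by linarith) (by linear_combination (norm := module) -h)
  · exact .inr <| .inr <| .inr <| .inl <| mem_openTriangle_of_smul_eq (neg_pos.2 h₃) hw₀ h₁ h₂
      (by linarith) (by linear_combination (norm := module) -h)
  · linarith

lemma sameSide_cases_of_relation {w₀ w₁ w₂ w₃ : ℝ} (h₂ : 0 < w₂) (h₃ : w₃ < 0)
    (hsum : w₀ + w₁ + w₂ + w₃ = 0) (h : w₀ • a + w₁ • b + w₂ • p + w₃ • q = 0) :
    q ∈ triangle a b p ∨ p ∈ triangle a b q ∨
      ¬Disjoint (segment ℝ a p) (segment ℝ b q) ∨ ¬Disjoint (segment ℝ b p) (segment ℝ a q) := by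
  rcases le_total 0 w₀ with h₀ | h₀ <;> rcases le_total 0 w₁ with h₁ | h₁
  · exact .inl <| mem_triangle_of_smul_eq (neg_pos.2 h₃) h₀ h₁ h₂.le (by linarith)
      (by linear_combination (norm := module) -h)
  · exact .inr <| .inr <| .inl <| not_disjoint_segment_of_smul_eq h₀ h₂.le (neg_nonneg.2 h₁)
      (neg_pos.2 h₃).le (by linarith) (by linarith) (by linear_combination (norm := module) h)
  · exact .inr <| .inr <| .inr <| not_disjoint_segment_of_smul_eq h₁ h₂.le (neg_nonneg.2 h₀)
      (neg_pos.2 h₃).le (by linarith) (by linarith) (by linear_combination (norm := module) h)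
  · exact .inr <| .inl <| mem_triangle_of_smul_eq h₂ (neg_nonneg.2 h₀) (neg_nonneg.2 h₁)
      (neg_pos.2 h₃).le (by linarith) (by linear_combination (norm := module) h)

lemma sameSide_cases (h : 0 < orient a b p * orient a b q) :
    q ∈ triangle a b p ∨ p ∈ triangle a b q ∨
      ¬Disjoint (segment ℝ a p) (segment ℝ b q) ∨ ¬Disjoint (segment ℝ b p) (segment ℝ a q) := by
  have hsum := orient_relation_sum a b p q
  have hrel := orient_relation a b p q
  rcases pos_and_pos_or_neg_and_neg_of_mul_pos h with ⟨hp, hq⟩ | ⟨hp, hq⟩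
  · exact sameSide_cases_of_relation hq (neg_lt_zero.2 hp) hsum hrel
  · exact sameSide_cases_of_relation (w₀ := -orient b p q) (w₁ := orient a p q)
      (neg_pos.2 hq) (neg_lt_zero.2 (neg_pos.2 hp)) (by linarith)
      (by rw [← neg_eq_zero.2 hrel]; module)

lemma eq_of_mem_openTriangle_of_mem_triangle {y₁ y₂ y₃ : ℝ × ℝ} (hd : orient a b c ≠ 0)
    (h₁ : y₁ ∈ triangle a b c) (h₂ : y₂ ∈ triangle a b c) (h₃ : y₃ ∈ triangle a b c)
    (ha : a ∈ openTriangle y₁ y₂ y₃) : y₁ = a ∧ y₂ = a ∧ y₃ = a := by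
  have coord : ∀ y ∈ triangle a b c, ∃ α ≤ 1, orient y b c = α * orient a b c ∧
      (α = 1 → y = a) := by
    rintro y ⟨α, β, γ, hα, hβ, hγ, hsum, rfl⟩
    refine ⟨α, by linarith, orient_eq_of_combination hsum rfl, fun h1 => ?_⟩
    obtain ⟨rfl, rfl⟩ : β = 0 ∧ γ = 0 := ⟨by linarith, by linarith⟩
    simp [h1]
  obtain ⟨α₁, hα₁, he₁, h1⟩ := coord y₁ h₁
  obtain ⟨α₂, hα₂, he₂, h2⟩ := coord y₂ h₂
  obtain ⟨α₃, hα₃, he₃, h3⟩ := coord y₃ h₃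
  obtain ⟨w₁, w₂, w₃, hw₁, hw₂, hw₃, hsum, hrep⟩ := ha
  have hcomb : orient a b c = w₁ * orient y₁ b c + w₂ * orient y₂ b c + w₃ * orient y₃ b c := by
    rw [← orient_combination hsum, hrep]
  have hone : w₁ * α₁ + w₂ * α₂ + w₃ * α₃ = 1 := by
    refine (mul_eq_right₀ hd).1 ?_
    rw [he₁, he₂, he₃] at hcomb
    linear_combination -hcomb
  refine ⟨h1 ?_, h2 ?_, h3 ?_⟩ <;> nlinarith

lemma segment_meets_side_of_mem_openTriangle (hd : orient a b c ≠ 0)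
    (hx : x ∈ openTriangle a b c) (hy : y ∉ openTriangle a b c) :
    ¬Disjoint (segment ℝ x y) (segment ℝ b c) ∨ ¬Disjoint (segment ℝ x y) (segment ℝ a c) ∨
      ¬Disjoint (segment ℝ x y) (segment ℝ a b) := by
  obtain ⟨α, β, γ, hα, hβ, hγ, hsum, rfl⟩ := hx
  obtain ⟨α', β', γ', hsum', rfl⟩ := exists_combination_of_orient_ne_zero hd y
  have hy' : ¬(0 < α' ∧ 0 < β' ∧ 0 < γ') := fun h => hy ⟨α', β', γ', h.1, h.2.1, h.2.2, hsum', rfl⟩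
  -- the smallest barycentric coordinate of `(1 - t) • x + t • y` is continuous in `t`, positive
  -- at `x` and nonpositive at `y`; where it vanishes the segment crosses a side
  set f : ℝ → ℝ := fun t => min (min ((1 - t) * α + t * α') ((1 - t) * β + t * β'))
    ((1 - t) * γ + t * γ')
  have hcont : ContinuousOn f (Set.Icc 0 1) := by fun_prop
  have hf0 : 0 ≤ f 0 := by simp [f, hα.le, hβ.le, hγ.le]
  have hf1 : f 1 ≤ 0 := by
    simp only [f, sub_self, zero_mul, one_mul, zero_add, min_le_iff]
    contrapose! hy'
    exact ⟨hy'.1.1, hy'.1.2, hy'.2⟩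
  obtain ⟨t, ⟨ht0, ht1⟩, hft⟩ := intermediate_value_Icc' zero_le_one hcont ⟨hf1, hf0⟩
  set u := (1 - t) * α + t * α'
  set v := (1 - t) * β + t * β'
  set w := (1 - t) * γ + t * γ'
  have hmin : min (min u v) w = 0 := hft
  have hu : 0 ≤ u := hmin ▸ (min_le_left _ _).trans (min_le_left _ _)
  have hv : 0 ≤ v := hmin ▸ (min_le_left _ _).trans (min_le_right _ _)
  have hw : 0 ≤ w := hmin ▸ min_le_right _ _
  have huvw : u + v + w = 1 := by linear_combination (1 - t) * hsum + t * hsum'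
  have hP : u • a + v • b + w • c ∈
      segment ℝ (α • a + β • b + γ • c) (α' • a + β' • b + γ' • c) :=
    ⟨1 - t, t, by linarith, ht0, by ring, by module⟩
  rcases min_choice (min u v) w with h | h <;> rw [h] at hmin
  · rcases min_choice u v with h' | h' <;> rw [h'] at hmin
    · exact .inl <| Set.not_disjoint_iff_nonempty_inter.2
        ⟨_, hP, v, w, hv, hw, by linarith, by rw [hmin, zero_smul, zero_add]⟩
    · exact .inr <| .inl <| Set.not_disjoint_iff_nonempty_inter.2
        ⟨_, hP, u, w, hu, hw, by linarith, by rw [hmin, zero_smul, add_zero]⟩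
  · exact .inr <| .inr <| Set.not_disjoint_iff_nonempty_inter.2
      ⟨_, hP, u, v, hu, hv, by linarith, by rw [hmin, zero_smul, add_zero]⟩

lemma mem_segment_of_orient_eq_zero (h : orient a b c = 0) :
    a ∈ segment ℝ b c ∨ b ∈ segment ℝ a c ∨ c ∈ segment ℝ a b := by
  rcases eq_or_ne a b with rfl | hab
  · exact .inl (left_mem_segment ℝ a c)
  have hn : 0 < (b.1 - a.1) ^ 2 + (b.2 - a.2) ^ 2 := by
    by_contra! hn
    exact hab (Prod.ext (by nlinarith) (by nlinarith))
  set t := ((c.1 - a.1) * (b.1 - a.1) + (c.2 - a.2) * (b.2 - a.2)) /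
    ((b.1 - a.1) ^ 2 + (b.2 - a.2) ^ 2)
  have hc : c = (1 - t) • a + t • b := by
    unfold orient at h
    ext <;> simp only [Prod.fst_add, Prod.snd_add, Prod.smul_fst, Prod.smul_snd, smul_eq_mul, t] <;>
      field_simp
    · linear_combination -(b.2 - a.2) * h
    · linear_combination (b.1 - a.1) * h
  rcases lt_or_ge t 0 with ht | ht
  · have ht1 : 0 < 1 - t := by linarith
    refine .inl ⟨-t / (1 - t), 1 / (1 - t), div_nonneg (by linarith) ht1.le, by positivity,
      by field_simp; ring, ?_⟩
    rw [hc]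
    match_scalars
    · field_simp
      ring
    · field_simp
  rcases le_or_gt t 1 with ht' | ht'
  · exact .inr <| .inr ⟨1 - t, t, by linarith, ht, by ring, hc.symm⟩
  · have ht0 : 0 < t := by linarith
    refine .inr <| .inl ⟨1 - 1 / t, 1 / t, by rw [sub_nonneg, div_le_one ht0]; exact ht'.le,
      by positivity, by ring, ?_⟩
    rw [hc]
    match_scalars
    · field_simp
      ring
    · field_simp

end Geometry

section Drawing

variable {V : Type*}

def frameGraph (G : SimpleGraph V) (S : Set V) : SimpleGraph V where
  Adj u v := G.Adj u v ∧ u ∈ S ∧ v ∈ S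
  symm.symm _ _ h := ⟨h.1.symm, h.2.2, h.2.1⟩

structure IsPlanarDrawing (H : SimpleGraph V) (D : V → ℝ × ℝ) : Prop where
  injOn : Set.InjOn D H.support
  notMem_openSegment ⦃u v w : V⦄ : H.Adj u v → w ∈ H.support → w ≠ u → w ≠ v →
    D w ∉ openSegment ℝ (D u) (D v)
  disjoint_segment ⦃u v x y : V⦄ : H.Adj u v → H.Adj x y → u ≠ x → u ≠ y → v ≠ x → v ≠ y →
    Disjoint (segment ℝ (D u) (D v)) (segment ℝ (D x) (D y))

lemma IsPlanarSLFrame.isPlanarDrawing {G : SimpleGraph V} {S : Set V} {D : V → ℝ × ℝ}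
    (h : IsPlanarSLFrame G S D) : IsPlanarDrawing (frameGraph G S) D where
  injOn := h.1.mono fun _ ⟨_, hv⟩ => hv.2.1
  notMem_openSegment _ _ _ huv hw := h.2.1 _ _ _ huv.1 huv.2.1 huv.2.2 hw.choose_spec.2.1
  disjoint_segment u v x y huv hxy hux huy hvx hvy := by
    refine Set.disjoint_left.2 fun p hp hp' => ?_
    obtain ⟨z, hz, hz', -⟩ := h.2.2 u v x y huv.1 hxy.1 huv.2.1 huv.2.2 hxy.2.1 hxy.2.2
      (by tauto) p ⟨hp, hp'⟩
    rcases hz with rfl | rfl <;> rcases hz' with rfl | rfl <;> contradiction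

namespace IsPlanarDrawing

variable {H : SimpleGraph V} {D : V → ℝ × ℝ} (hD : IsPlanarDrawing H D)
include hD

lemma eq_or_eq_of_mem_segment {u v w : V} (huv : H.Adj u v) (hw : w ∈ H.support)
    (h : D w ∈ segment ℝ (D u) (D v)) : w = u ∨ w = v := by
  by_contra! hne
  rw [← insert_endpoints_openSegment] at h
  rcases h with h | h | h
  · exact hne.1 (hD.injOn hw ⟨v, huv⟩ h)
  · exact hne.2 (hD.injOn hw ⟨u, huv.symm⟩ h)
  · exact hD.notMem_openSegment huv hw hne.1 hne.2 h

lemma orient_ne_zero {x y z : V} (hxy : H.Adj x y) (hyz : H.Adj y z) (hxz : H.Adj x z) :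
    orient (D x) (D y) (D z) ≠ 0 := by
  intro h
  rcases mem_segment_of_orient_eq_zero h with h | h | h
  · rcases hD.eq_or_eq_of_mem_segment hyz ⟨y, hxy⟩ h with rfl | rfl
    exacts [hxy.ne rfl, hxz.ne rfl]
  · rcases hD.eq_or_eq_of_mem_segment hxz ⟨z, hyz⟩ h with rfl | rfl
    exacts [hxy.ne rfl, hyz.ne rfl]
  · rcases hD.eq_or_eq_of_mem_segment hxy ⟨x, hxz.symm⟩ h with rfl | rfl
    exacts [hxz.ne rfl, hyz.ne rfl]

lemma mem_openTriangle_of_mem_triangle {x y z p : V} (hxy : H.Adj x y) (hyz : H.Adj y z)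
    (hxz : H.Adj x z) (hp : p ∈ H.support) (hpx : p ≠ x) (hpy : p ≠ y) (hpz : p ≠ z)
    (h : D p ∈ triangle (D x) (D y) (D z)) : D p ∈ openTriangle (D x) (D y) (D z) := by
  obtain ⟨α, β, γ, hα, hβ, hγ, hsum, hrep⟩ := h
  refine ⟨α, β, γ, hα.lt_of_ne ?_, hβ.lt_of_ne ?_, hγ.lt_of_ne ?_, hsum, hrep⟩ <;>
    rintro rfl
  · rcases hD.eq_or_eq_of_mem_segment hyz hp
      ⟨β, γ, hβ, hγ, by linarith, by rw [← hrep, zero_smul, zero_add]⟩ with h | h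
    exacts [hpy h, hpz h]
  · rcases hD.eq_or_eq_of_mem_segment hxz hp
      ⟨α, γ, hα, hγ, by linarith, by rw [← hrep, zero_smul, add_zero]⟩ with h | h
    exacts [hpx h, hpz h]
  · rcases hD.eq_or_eq_of_mem_segment hxy hp
      ⟨α, β, hα, hβ, by linarith, by rw [← hrep, zero_smul, add_zero]⟩ with h | h
    exacts [hpx h, hpy h]

lemma mem_openTriangle_of_adj {a b c x m : V} (hab : H.Adj a b) (hbc : H.Adj b c)
    (hac : H.Adj a c) (hxm : H.Adj x m) (hxa : x ≠ a) (hxb : x ≠ b) (hxc : x ≠ c)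
    (hma : m ≠ a) (hmb : m ≠ b) (hmc : m ≠ c) (hx : D x ∈ openTriangle (D a) (D b) (D c)) :
    D m ∈ openTriangle (D a) (D b) (D c) := by
  by_contra hm
  rcases segment_meets_side_of_mem_openTriangle (hD.orient_ne_zero hab hbc hac) hx hm
    with h | h | h
  · exact h (hD.disjoint_segment hxm hbc hxb hxc hmb hmc)
  · exact h (hD.disjoint_segment hxm hac hxa hxc hma hmc)
  · exact h (hD.disjoint_segment hxm hab hxa hxb hma hmb)

lemma mem_openTriangle_or_of_sameSide {x y q q' : V} (hxy : H.Adj x y) (hqx : H.Adj q x)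
    (hqy : H.Adj q y) (hq'x : H.Adj q' x) (hq'y : H.Adj q' y) (hqq' : q ≠ q')
    (h : 0 < orient (D x) (D y) (D q) * orient (D x) (D y) (D q')) :
    D q' ∈ openTriangle (D x) (D y) (D q) ∨ D q ∈ openTriangle (D x) (D y) (D q') := by
  rcases sameSide_cases h with h | h | h | h
  · exact .inl <| hD.mem_openTriangle_of_mem_triangle hxy hqy.symm hqx.symm ⟨x, hq'x⟩
      hq'x.ne hq'y.ne hqq'.symm h
  · exact .inr <| hD.mem_openTriangle_of_mem_triangle hxy hq'y.symm hq'x.symm ⟨x, hqx⟩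
      hqx.ne hqy.ne hqq' h
  · exact (h (hD.disjoint_segment hqx.symm hq'y.symm
      hxy.ne hq'x.ne.symm hqy.ne hqq')).elim
  · exact (h (hD.disjoint_segment hqy.symm hq'x.symm
      hxy.ne.symm hq'y.ne.symm hqx.ne hqq')).elim

lemma exists_mem_openTriangle_of_clique {p q r s : V} (hpq : H.Adj p q) (hpr : H.Adj p r)
    (hps : H.Adj p s) (hqr : H.Adj q r) (hqs : H.Adj q s) (hrs : H.Adj r s) :
    D p ∈ openTriangle (D q) (D r) (D s) ∨ D q ∈ openTriangle (D p) (D r) (D s) ∨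
      D r ∈ openTriangle (D p) (D q) (D s) ∨ D s ∈ openTriangle (D p) (D q) (D r) := by
  rcases radon_four (hD.orient_ne_zero hqr hrs hqs) (neg_ne_zero.2 (hD.orient_ne_zero hpr hrs hps))
    (hD.orient_ne_zero hpq hqs hps) (neg_ne_zero.2 (hD.orient_ne_zero hpq hqr hpr))
    (orient_relation_sum _ _ _ _) (orient_relation _ _ _ _) with h | h | h | h | h | h | h
  · exact .inl h
  · exact .inr (.inl h)
  · exact .inr (.inr (.inl h))
  · exact .inr (.inr (.inr h))
  · exact (h (hD.disjoint_segment hpq hrs hpr.ne hps.ne hqr.ne hqs.ne)).elim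
  · exact (h (hD.disjoint_segment hpr hqs hpq.ne hps.ne hqr.ne.symm hrs.ne)).elim
  · exact (h (hD.disjoint_segment hps hqr hpq.ne hpr.ne hqs.ne.symm hrs.ne.symm)).elim

lemma vertex_notMem_openTriangle {y₁ y₂ y₃ : V} {a b c : ℝ × ℝ} (hy : H.Adj y₁ y₂)
    (hd : orient a b c ≠ 0) (h₁ : D y₁ ∈ triangle a b c) (h₂ : D y₂ ∈ triangle a b c)
    (h₃ : D y₃ ∈ triangle a b c) : a ∉ openTriangle (D y₁) (D y₂) (D y₃) := fun ha =>
  have ⟨e₁, e₂, _⟩ := eq_of_mem_openTriangle_of_mem_triangle hd h₁ h₂ h₃ ha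
  hy.ne (hD.injOn ⟨_, hy⟩ ⟨_, hy.symm⟩ (e₁.trans e₂.symm))

lemma not_sameSide_of_path {u v w q q' : V} (huv : H.Adj u v) (hvw : H.Adj v w) (huw : u ≠ w)
    (hq : H.Adj q u ∧ H.Adj q v ∧ H.Adj q w) (hq' : H.Adj q' u ∧ H.Adj q' v ∧ H.Adj q' w)
    (hqq' : q ≠ q') (h₁ : 0 < orient (D u) (D v) (D q) * orient (D u) (D v) (D q'))
    (h₂ : 0 < orient (D v) (D w) (D q) * orient (D v) (D w) (D q')) : False := by
  wlog h : D q' ∈ openTriangle (D u) (D v) (D q) generalizing q q'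
  · exact this hq' hq hqq'.symm (by rwa [mul_comm]) (by rwa [mul_comm])
      ((hD.mem_openTriangle_or_of_sameSide huv hq.1 hq.2.1 hq'.1 hq'.2.1 hqq' h₁).resolve_left h)
  obtain ⟨hqu, hqv, hqw⟩ := hq
  obtain ⟨hq'u, hq'v, hq'w⟩ := hq'
  have hw : D w ∈ openTriangle (D u) (D v) (D q) :=
    hD.mem_openTriangle_of_adj huv hqv.symm hqu.symm hq'w hq'u.ne hq'v.ne hqq'.symm huw.symm
      hvw.ne.symm hqw.ne.symm h
  rcases hD.mem_openTriangle_or_of_sameSide hvw hqv hqw hq'v hq'w hqq' h₂ with h' | h'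
  · have hu : D u ∈ openTriangle (D v) (D w) (D q) :=
      hD.mem_openTriangle_of_adj hvw hqw.symm hqv.symm hq'u hq'v.ne hq'w.ne hqq'.symm huv.ne huw
        hqu.ne.symm h'
    exact hD.vertex_notMem_openTriangle hvw (hD.orient_ne_zero huv hqv.symm hqu.symm)
      (middle_mem_triangle _ _ _) (openTriangle_subset_triangle hw) (right_mem_triangle _ _ _) hu
  · exact hD.vertex_notMem_openTriangle hvw (hD.orient_ne_zero hqu huv hqv)
      (mem_triangle_rotate (mem_triangle_rotate (middle_mem_triangle _ _ _)))
      (mem_triangle_rotate (mem_triangle_rotate (openTriangle_subset_triangle hw)))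
      (mem_triangle_rotate (mem_triangle_rotate (openTriangle_subset_triangle h))) h'

lemma card_le_four_of_forall_adj {u v w : V} (huv : H.Adj u v) (hvw : H.Adj v w) (huw : u ≠ w)
    (Q : Finset V) (hQ : ∀ q ∈ Q, H.Adj q u ∧ H.Adj q v ∧ H.Adj q w) : Q.card ≤ 4 := by
  by_contra! hcard
  let side : V → Bool × Bool := fun q =>
    (decide (0 < orient (D u) (D v) (D q)), decide (0 < orient (D v) (D w) (D q)))
  obtain ⟨q, hq, q', hq', hqq', heq⟩ := Finset.exists_ne_map_eq_of_card_lt_of_maps_to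
    (t := Finset.univ) (by simpa using hcard) (f := side) fun _ _ => Finset.mem_univ _
  obtain ⟨hqu, hqv, hqw⟩ := hQ q hq
  obtain ⟨hq'u, hq'v, hq'w⟩ := hQ q' hq'
  simp only [side, Prod.mk.injEq, decide_eq_decide] at heq
  exact hD.not_sameSide_of_path huv hvw huw (hQ q hq) (hQ q' hq') hqq'
    (mul_pos_of_ne_zero_of_pos_iff (hD.orient_ne_zero huv hqv.symm hqu.symm)
      (hD.orient_ne_zero huv hq'v.symm hq'u.symm) heq.1)
    (mul_pos_of_ne_zero_of_pos_iff (hD.orient_ne_zero hvw hqw.symm hqv.symm)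
      (hD.orient_ne_zero hvw hq'w.symm hq'v.symm) heq.2)

lemma exists_triangle_enclosing_common_neighbors {X₁ X₂ Q R P : V} (hX : H.Adj X₁ X₂)
    (hQR : H.Adj Q R)
    (hadj : ∀ X ∈ ({X₁, X₂} : Set V), H.Adj Q X ∧ H.Adj R X ∧ H.Adj P X)
    (hPQ : P ≠ Q) (hPR : P ≠ R) :
    ∃ y₁ y₂ y₃ : V, y₁ ∈ ({X₁, X₂} : Set V) ∧ y₂ ∈ ({X₁, X₂, Q, R} : Set V) ∧
      y₃ ∈ ({X₁, X₂, Q, R} : Set V) ∧ H.Adj y₁ y₂ ∧ H.Adj y₂ y₃ ∧ H.Adj y₁ y₃ ∧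
      D Q ∈ triangle (D y₁) (D y₂) (D y₃) ∧ D R ∈ triangle (D y₁) (D y₂) (D y₃) ∧
      ∀ Z, H.Adj Z Q → H.Adj Z R → H.Adj Z P → Z ≠ X₁ → Z ≠ X₂ →
        D Z ∈ openTriangle (D y₁) (D y₂) (D y₃) := by
  obtain ⟨hQ₁, hR₁, hP₁⟩ := hadj X₁ (by simp)
  obtain ⟨hQ₂, hR₂, hP₂⟩ := hadj X₂ (by simp)
  rcases hD.exists_mem_openTriangle_of_clique hX hQ₁.symm hR₁.symm hQ₂.symm hR₂.symm hQR
    with h | h | h | h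
  · have hP := hD.mem_openTriangle_of_adj hQ₂.symm hQR hR₂.symm hP₁.symm hX.ne hQ₁.ne.symm
      hR₁.ne.symm hP₂.ne hPQ hPR h
    refine ⟨X₂, Q, R, by simp, by simp, by simp, hQ₂.symm, hQR, hR₂.symm,
      middle_mem_triangle _ _ _, right_mem_triangle _ _ _, fun Z hZQ hZR hZP _ hZ₂ => ?_⟩
    exact hD.mem_openTriangle_of_adj hQ₂.symm hQR hR₂.symm hZP.symm hP₂.ne hPQ hPR hZ₂
      hZQ.ne hZR.ne hP
  · have hP := hD.mem_openTriangle_of_adj hQ₁.symm hQR hR₁.symm hP₂.symm hX.ne.symm hQ₂.ne.symm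
      hR₂.ne.symm hP₁.ne hPQ hPR h
    refine ⟨X₁, Q, R, by simp, by simp, by simp, hQ₁.symm, hQR, hR₁.symm,
      middle_mem_triangle _ _ _, right_mem_triangle _ _ _, fun Z hZQ hZR hZP hZ₁ _ => ?_⟩
    exact hD.mem_openTriangle_of_adj hQ₁.symm hQR hR₁.symm hZP.symm hP₁.ne hPQ hPR hZ₁
      hZQ.ne hZR.ne hP
  · refine ⟨X₁, X₂, R, by simp, by simp, by simp, hX, hR₂.symm, hR₁.symm,
      openTriangle_subset_triangle h, right_mem_triangle _ _ _,
      fun Z hZQ hZR _ hZ₁ hZ₂ => ?_⟩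
    exact hD.mem_openTriangle_of_adj hX hR₂.symm hR₁.symm hZQ.symm hQ₁.ne hQ₂.ne hQR.ne hZ₁ hZ₂
      hZR.ne h
  · refine ⟨X₁, X₂, Q, by simp, by simp, by simp, hX, hQ₂.symm, hQ₁.symm,
      right_mem_triangle _ _ _, openTriangle_subset_triangle h,
      fun Z hZQ hZR _ hZ₁ hZ₂ => ?_⟩
    exact hD.mem_openTriangle_of_adj hX hQ₂.symm hQ₁.symm hZR.symm hR₁.ne hR₂.ne hQR.ne.symm hZ₁
      hZ₂ hZQ.ne h

-- The `K₄` on `Q, R, A₁, A₂` yields a triangle with an `A`-corner whose closure contains `Q, R`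
-- and whose interior contains `B₁, B₂`; the `K₄` on `Q, R, B₁, B₂` then yields a triangle inside
-- it whose interior contains that `A`-corner.
lemma false_of_three_apexes_of_two_edges {Q R P A₁ A₂ B₁ B₂ : V} (hQR : H.Adj Q R)
    (hA : H.Adj A₁ A₂) (hB : H.Adj B₁ B₂)
    (hadj : ∀ X ∈ ({Q, R, P} : Set V), ∀ Y ∈ ({A₁, A₂, B₁, B₂} : Set V), H.Adj X Y)
    (hPQ : P ≠ Q) (hPR : P ≠ R)
    (hAB : ∀ X ∈ ({A₁, A₂} : Set V), ∀ Y ∈ ({B₁, B₂} : Set V), X ≠ Y) : False := by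
  have hQ Y (hY : Y ∈ ({A₁, A₂, B₁, B₂} : Set V)) := hadj Q (by simp) Y hY
  have hR Y (hY : Y ∈ ({A₁, A₂, B₁, B₂} : Set V)) := hadj R (by simp) Y hY
  have hP Y (hY : Y ∈ ({A₁, A₂, B₁, B₂} : Set V)) := hadj P (by simp) Y hY
  obtain ⟨δ₁, δ₂, δ₃, hδ₁, -, -, h₁₂, h₂₃, h₁₃, hQΔ, hRΔ, hΔ⟩ :=
    hD.exists_triangle_enclosing_common_neighbors hA hQR (fun X hX => by
      rcases hX with rfl | rfl <;> exact ⟨hQ _ (by simp), hR _ (by simp), hP _ (by simp)⟩) hPQ hPR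
  have hBΔ : ∀ B ∈ ({B₁, B₂} : Set V), D B ∈ openTriangle (D δ₁) (D δ₂) (D δ₃) := by
    intro B hB'
    have hB'' : B ∈ ({A₁, A₂, B₁, B₂} : Set V) := by rcases hB' with rfl | rfl <;> simp
    exact hΔ B (hQ B hB'').symm (hR B hB'').symm (hP B hB'').symm
      (hAB A₁ (by simp) B hB').symm (hAB A₂ (by simp) B hB').symm
  obtain ⟨y₁, y₂, y₃, hy₁, hy₂, hy₃, hy₁₂, -, -, -, -, hΔ'⟩ :=
    hD.exists_triangle_enclosing_common_neighbors hB hQR (fun X hX => by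
      rcases hX with rfl | rfl <;> exact ⟨hQ _ (by simp), hR _ (by simp), hP _ (by simp)⟩) hPQ hPR
  have hyΔ : ∀ y ∈ ({B₁, B₂, Q, R} : Set V), D y ∈ triangle (D δ₁) (D δ₂) (D δ₃) := by
    rintro y (rfl | rfl | rfl | rfl)
    exacts [openTriangle_subset_triangle (hBΔ _ (by simp)),
      openTriangle_subset_triangle (hBΔ _ (by simp)), hQΔ, hRΔ]
  have hδ₁' : δ₁ ∈ ({A₁, A₂, B₁, B₂} : Set V) := by rcases hδ₁ with rfl | rfl <;> simp
  exact hD.vertex_notMem_openTriangle hy₁₂ (hD.orient_ne_zero h₁₂ h₂₃ h₁₃)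
    (hyΔ y₁ (by rcases hy₁ with rfl | rfl <;> simp)) (hyΔ y₂ hy₂) (hyΔ y₃ hy₃)
    (hΔ' δ₁ (hQ δ₁ hδ₁').symm (hR δ₁ hδ₁').symm (hP δ₁ hδ₁').symm
      (hAB δ₁ hδ₁ B₁ (by simp)) (hAB δ₁ hδ₁ B₂ (by simp)))

end IsPlanarDrawing

end Drawing

def GVert.cycle : Fin 3 → Fin 4 → GVert
  | 0, k => .a k
  | 1, k => .b k
  | 2, k => .c k

lemma graphG_adj_cycle (c : Fin 3) (k : Fin 4) : GraphG.Adj (.cycle c k) (.cycle c (k + 1)) := by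
  fin_cases c <;> simp [GraphG, GRel, GVert.cycle]

lemma graphG_adj_cycle_pred (c : Fin 3) (k : Fin 4) :
    GraphG.Adj (.cycle c (k + 3)) (.cycle c k) := by
  simpa [add_assoc] using graphG_adj_cycle c (k + 3)

lemma graphG_adj_q_cycle (i : Fin 4) (j : Fin 2) (c : Fin 3) (k : Fin 4) :
    GraphG.Adj (.q i j) (.cycle c k) := by
  fin_cases c <;> simp [GraphG, GRel, GVert.cycle]

lemma graphG_adj_r_q (i : Fin 4) (j : Fin 2) : GraphG.Adj (.r i j) (.q i j) := by
  simp [GraphG, GRel]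

lemma graphG_adj_r_cycle (i : Fin 4) (j : Fin 2) (c : Fin 3) :
    GraphG.Adj (.r i j) (.cycle c i) ∧ GraphG.Adj (.r i j) (.cycle c (i + 1)) := by
  fin_cases c <;> simp [GraphG, GRel, GVert.cycle]

lemma eq_q_or_cycle_of_graphG_adj_r {i : Fin 4} {j : Fin 2} {x : GVert}
    (h : GraphG.Adj (.r i j) x) :
    x = .q i j ∨ ∃ c k, x = .cycle c k := by
  cases x with
  | a k => exact .inr ⟨0, k, rfl⟩
  | b k => exact .inr ⟨1, k, rfl⟩
  | c k => exact .inr ⟨2, k, rfl⟩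
  | q i' j' => simp_all [GraphG, GRel]
  | r i' j' => simp [GraphG, GRel] at h

lemma cycle_add_three_ne (c : Fin 3) (k : Fin 4) : GVert.cycle c (k + 3) ≠ .cycle c (k + 1) := by
  fin_cases c <;> fin_cases k <;> decide

section Storyplan

variable {V : Type*} {G : SimpleGraph V} {len : ℕ} {s e : V → ℕ} {D : V → ℝ × ℝ}

lemma IsGeomStoryplan.start_le_end (h : IsGeomStoryplan G len s e D) (v : V) : s v ≤ e v :=
  (h.2.1 v).2.1

lemma IsGeomStoryplan.start_le_end_of_adj (h : IsGeomStoryplan G len s e D) {u v : V}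
    (huv : G.Adj u v) : s u ≤ e v :=
  have ⟨_, hu, _, _, hv⟩ := h.2.2.1 u v huv
  hu.trans hv

lemma IsGeomStoryplan.isPlanarDrawing (h : IsGeomStoryplan G len s e D) {v : V} {t : ℕ}
    (hs : s v ≤ t) (he : t ≤ e v) :
    IsPlanarDrawing (frameGraph G {w | s w ≤ t ∧ t ≤ e w}) D :=
  (h.2.2.2 t ((h.2.1 v).1.trans hs) (he.trans (h.2.1 v).2.2)).isPlanarDrawing

end Storyplan

def cycleStart (s : GVert → ℕ) : ℕ :=
  Finset.univ.sup fun ck : Fin 3 × Fin 4 => s (.cycle ck.1 ck.2)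

def cycleEnd (e : GVert → ℕ) : ℕ :=
  Finset.univ.inf' Finset.univ_nonempty fun ck : Fin 3 × Fin 4 => e (.cycle ck.1 ck.2)

lemma start_cycle_le_cycleStart (s : GVert → ℕ) (c : Fin 3) (k : Fin 4) :
    s (.cycle c k) ≤ cycleStart s :=
  Finset.le_sup (f := fun ck : Fin 3 × Fin 4 => s (.cycle ck.1 ck.2)) (Finset.mem_univ (c, k))

lemma cycleEnd_le_end_cycle (e : GVert → ℕ) (c : Fin 3) (k : Fin 4) :
    cycleEnd e ≤ e (.cycle c k) :=
  Finset.inf'_le (f := fun ck : Fin 3 × Fin 4 => e (.cycle ck.1 ck.2)) (Finset.mem_univ (c, k))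

lemma cyclesVisible_of_le {s e : GVert → ℕ} {t : ℕ} (hs : cycleStart s ≤ t) (he : t ≤ cycleEnd e) :
    CyclesVisible s e t := fun k =>
  have h c := (⟨(start_cycle_le_cycleStart s c k).trans hs,
    he.trans (cycleEnd_le_end_cycle e c k)⟩ : Visible s e t (.cycle c k))
  ⟨h 0, h 1, h 2⟩

lemma IsPlanarDrawing.false_of_two_apex_pairs {S : Set GVert} {D : GVert → ℝ × ℝ}
    (hF : IsPlanarDrawing (frameGraph GraphG S) D) {p p' : Fin 4 × Fin 2} (hpp' : p ≠ p')
    (hr : GVert.r p.1 p.2 ∈ S) (hN : ∀ x, GraphG.Adj (.r p.1 p.2) x → x ∈ S)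
    (hq' : GVert.q p'.1 p'.2 ∈ S) : False := by
  obtain ⟨i, j⟩ := p
  obtain ⟨i', j'⟩ := p'
  have hq := hN _ (graphG_adj_r_q i j)
  have hcyc : ∀ Y ∈ ({.cycle 0 i, .cycle 0 (i + 1), .cycle 1 i, .cycle 1 (i + 1)} : Set GVert),
      ∃ c k, Y = .cycle c k ∧ GraphG.Adj (.r i j) Y := by
    rintro Y (rfl | rfl | rfl | rfl)
    exacts [⟨0, i, rfl, (graphG_adj_r_cycle i j 0).1⟩, ⟨0, _, rfl, (graphG_adj_r_cycle i j 0).2⟩,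
      ⟨1, i, rfl, (graphG_adj_r_cycle i j 1).1⟩, ⟨1, _, rfl, (graphG_adj_r_cycle i j 1).2⟩]
  refine hF.false_of_three_apexes_of_two_edges (Q := .q i j) (R := .r i j) (P := .q i' j')
    ⟨(graphG_adj_r_q i j).symm, hq, hr⟩
    ⟨graphG_adj_cycle 0 i, hN _ (graphG_adj_r_cycle i j 0).1, hN _ (graphG_adj_r_cycle i j 0).2⟩
    ⟨graphG_adj_cycle 1 i, hN _ (graphG_adj_r_cycle i j 1).1, hN _ (graphG_adj_r_cycle i j 1).2⟩
    ?_ (fun h => hpp' (by injection h with h₁ h₂; rw [h₁, h₂])) (by simp)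
    (by rintro _ (rfl | rfl) _ (rfl | rfl) <;> simp [GVert.cycle])
  rintro X hX Y hY
  obtain ⟨c, k, rfl, hrY⟩ := hcyc Y hY
  have hY' := hN _ hrY
  rcases hX with rfl | rfl | rfl
  exacts [⟨graphG_adj_q_cycle i j c k, hq, hY'⟩, ⟨hrY, hr, hY'⟩,
    ⟨graphG_adj_q_cycle _ _ c k, hq', hY'⟩]

namespace IsGeomStoryplan

variable {len : ℕ} {s e : GVert → ℕ} {D : GVert → ℝ × ℝ}
  (hSP : IsGeomStoryplan GraphG len s e D)
include hSP

lemma cycleStart_le_end_q (i : Fin 4) (j : Fin 2) : cycleStart s ≤ e (.q i j) :=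
  Finset.sup_le fun ck _ => hSP.start_le_end_of_adj (graphG_adj_q_cycle i j ck.1 ck.2).symm

lemma start_q_le_cycleEnd (i : Fin 4) (j : Fin 2) : s (.q i j) ≤ cycleEnd e :=
  Finset.le_inf' _ _ fun ck _ => hSP.start_le_end_of_adj (graphG_adj_q_cycle i j ck.1 ck.2)

lemma cycleStart_le_cycleEnd : cycleStart s ≤ cycleEnd e := by
  by_contra! h
  obtain ⟨⟨c, k⟩, -, hck⟩ := Finset.exists_mem_eq_inf' Finset.univ_nonempty
    fun ck : Fin 3 × Fin 4 => e (.cycle ck.1 ck.2)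
  set S := {w | s w ≤ e (.cycle c k) ∧ e (.cycle c k) ≤ e w}
  have hF := hSP.isPlanarDrawing (hSP.start_le_end (.cycle c k)) le_rfl
  have hmem : ∀ x, GraphG.Adj x (.cycle c k) → cycleEnd e ≤ e x → x ∈ S :=
    fun x hx hex => ⟨hSP.start_le_end_of_adj hx, hck ▸ hex⟩
  have hq i j : GVert.q i j ∈ S :=
    hmem _ (graphG_adj_q_cycle i j c k) (h.le.trans (hSP.cycleStart_le_end_q i j))
  have hu := hmem _ (graphG_adj_cycle_pred c k) (cycleEnd_le_end_cycle e c _)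
  have hv : GVert.cycle c k ∈ S := ⟨(hSP.start_le_end _), le_rfl⟩
  have hw := hmem _ (graphG_adj_cycle c k).symm (cycleEnd_le_end_cycle e c _)
  have hcard := hF.card_le_four_of_forall_adj ⟨graphG_adj_cycle_pred c k, hu, hv⟩
    ⟨graphG_adj_cycle c k, hv, hw⟩ (cycle_add_three_ne c k)
    (Finset.univ.image fun ij : Fin 4 × Fin 2 => GVert.q ij.1 ij.2) (by
      simp only [Finset.mem_image, Finset.mem_univ, true_and, forall_exists_index]
      rintro _ ⟨i, j⟩ rfl
      exact ⟨⟨graphG_adj_q_cycle i j c _, hq i j, hu⟩, ⟨graphG_adj_q_cycle i j c k, hq i j, hv⟩,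
        ⟨graphG_adj_q_cycle i j c _, hq i j, hw⟩⟩)
  rw [Finset.card_image_of_injective _ fun _ _ h => by simpa [Prod.ext_iff] using h] at hcard
  simp at hcard

lemma mem_window_of_adj_r {i : Fin 4} {j : Fin 2} {x : GVert} (hx : GraphG.Adj (.r i j) x) :
    s x ≤ cycleEnd e ∧ cycleStart s ≤ e x := by
  rcases eq_q_or_cycle_of_graphG_adj_r hx with rfl | ⟨c, k, rfl⟩
  · exact ⟨hSP.start_q_le_cycleEnd i j, hSP.cycleStart_le_end_q i j⟩
  · exact ⟨(start_cycle_le_cycleStart s c k).trans hSP.cycleStart_le_cycleEnd,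
      hSP.cycleStart_le_cycleEnd.trans (cycleEnd_le_end_cycle e c k)⟩

lemma eq_of_end_r_lt_cycleStart {p p' : Fin 4 × Fin 2} (hp : e (.r p.1 p.2) < cycleStart s)
    (hp' : e (.r p'.1 p'.2) < cycleStart s) : p = p' := by
  wlog hle : e (.r p'.1 p'.2) ≤ e (.r p.1 p.2) generalizing p p'
  · exact (this hp' hp (le_of_not_ge hle)).symm
  by_contra hne
  exact (hSP.isPlanarDrawing (hSP.start_le_end _) le_rfl).false_of_two_apex_pairs hne
    ⟨(hSP.start_le_end _), le_rfl⟩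
    (fun x hx => ⟨hSP.start_le_end_of_adj hx.symm, hp.le.trans (hSP.mem_window_of_adj_r hx).2⟩)
    ⟨(hSP.start_le_end_of_adj (graphG_adj_r_q _ _).symm).trans hle,
      hp.le.trans (hSP.cycleStart_le_end_q _ _)⟩

lemma eq_of_cycleEnd_lt_start_r {p p' : Fin 4 × Fin 2} (hp : cycleEnd e < s (.r p.1 p.2))
    (hp' : cycleEnd e < s (.r p'.1 p'.2)) : p = p' := by
  wlog hle : s (.r p.1 p.2) ≤ s (.r p'.1 p'.2) generalizing p p'
  · exact (this hp' hp (le_of_not_ge hle)).symm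
  by_contra hne
  exact (hSP.isPlanarDrawing le_rfl (hSP.start_le_end _)).false_of_two_apex_pairs hne
    ⟨le_rfl, (hSP.start_le_end _)⟩
    (fun x hx => ⟨(hSP.mem_window_of_adj_r hx).1.trans hp.le, hSP.start_le_end_of_adj hx⟩)
    ⟨(hSP.start_q_le_cycleEnd _ _).trans hp.le,
      hle.trans (hSP.start_le_end_of_adj (graphG_adj_r_q _ _))⟩

lemma exists_visible_of_mem_window {i : Fin 4} {j : Fin 2} (h₁ : cycleStart s ≤ e (.r i j))
    (h₂ : s (.r i j) ≤ cycleEnd e) :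
    ∃ t, Visible s e t (.q i j) ∧ Visible s e t (.r i j) ∧ CyclesVisible s e t := by
  have hq := hSP.start_le_end_of_adj (graphG_adj_r_q i j)
  have hr := hSP.start_le_end_of_adj (graphG_adj_r_q i j).symm
  refine ⟨max (max (s (.q i j)) (s (.r i j))) (cycleStart s), ⟨by omega, ?_⟩, ⟨by omega, ?_⟩,
    cyclesVisible_of_le (le_max_right _ _) ?_⟩
  · exact max_le (max_le (hSP.start_le_end _) hq) (hSP.cycleStart_le_end_q i j)
  · exact max_le (max_le hr (hSP.start_le_end _)) h₁
  · exact max_le (max_le (hSP.start_q_le_cycleEnd i j) h₂) hSP.cycleStart_le_cycleEnd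

end IsGeomStoryplan

theorem six_apex_pairs_with_all_cycles
    (len : ℕ) (s e : GVert → ℕ) (D : GVert → ℝ × ℝ)
    (hSP : IsGeomStoryplan GraphG len s e D) :
    ∃ S : Finset (Fin 4 × Fin 2), 6 ≤ S.card ∧
      ∀ ij ∈ S, ∃ t, Visible s e t (.q ij.1 ij.2) ∧ Visible s e t (.r ij.1 ij.2) ∧
        CyclesVisible s e t := by
  let meetsWindow (p : Fin 4 × Fin 2) : Prop :=
    cycleStart s ≤ e (.r p.1 p.2) ∧ s (.r p.1 p.2) ≤ cycleEnd e
  have hmiss : (Finset.univ.filter fun p => ¬meetsWindow p).card ≤ 2 :=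
    calc (Finset.univ.filter fun p => ¬meetsWindow p).card
        ≤ (Finset.univ.filter fun p : Fin 4 × Fin 2 => e (.r p.1 p.2) < cycleStart s).card +
          (Finset.univ.filter fun p : Fin 4 × Fin 2 => cycleEnd e < s (.r p.1 p.2)).card := by
          refine (Finset.card_le_card fun p hp => ?_).trans (Finset.card_union_le _ _)
          simp only [Finset.mem_filter, Finset.mem_univ, true_and, Finset.mem_union, meetsWindow]
            at hp ⊢
          omega
      _ ≤ 1 + 1 := add_le_add
          (Finset.card_le_one.2 fun p hp p' hp' =>
            hSP.eq_of_end_r_lt_cycleStart (Finset.mem_filter.1 hp).2 (Finset.mem_filter.1 hp').2)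
          (Finset.card_le_one.2 fun p hp p' hp' =>
            hSP.eq_of_cycleEnd_lt_start_r (Finset.mem_filter.1 hp).2 (Finset.mem_filter.1 hp').2)
  refine ⟨Finset.univ.filter meetsWindow, ?_, fun p hp => hSP.exists_visible_of_mem_window
    (Finset.mem_filter.1 hp).2.1 (Finset.mem_filter.1 hp).2.2⟩
  have := Finset.card_filter_add_card_filter_not (s := Finset.univ) meetsWindow
  simp only [Finset.card_univ, Fintype.card_prod, Fintype.card_fin] at this
  omega
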